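/- arXiv:1309.4659 — 3 statements merged into one kernel-verified Lean document; each statement's English description precedes it below -/
import Mathlib

section
/- Let f_r, f_t, f_tt ∈ ℝ^d with f_r and f_t linearly independent and f_t ≠ 0. Then the quantity η = ((⟪f_r,f_t⟫⟪f_tt,f_t⟫ - ⟪f_t,f_t⟫⟪f_r,f_tt⟫))/(|f_r∧f_t|·⟪f_t,f_t⟫) satisfies |η| ≤ |f_t∧f_tt|/|f_t|², where |x∧y| = sqrt(|x|²|y|² - ⟪x,y⟫²). -/
/-!
Projecting `f_r` and `f_tt` onto the orthogonal complement of `f_t` (scaled by `‖f_t‖²` to avoid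
dividing) turns the numerator into an inner product and the two wedge norms into the norms of the
projections, so Cauchy–Schwarz bounds the numerator by `|f_r ∧ f_t| |f_t ∧ f_tt|`. Where the denominator
on the left vanishes, `x / 0 = 0` makes the left side zero.
-/

open RealInnerProductSpace

section

variable {E : Type*} [NormedAddCommGroup E] [InnerProductSpace ℝ E]

lemma inner_sq_norm_smul_sub_inner_smul (a b c : E) :
    ⟪‖b‖ ^ 2 • a - ⟪a, b⟫ • b, ‖b‖ ^ 2 • c - ⟪c, b⟫ • b⟫ =
      ‖b‖ ^ 2 * (‖b‖ ^ 2 * ⟪a, c⟫ - ⟪a, b⟫ * ⟪c, b⟫) := by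
  simp only [inner_sub_left, inner_sub_right, real_inner_smul_left, real_inner_smul_right,
    real_inner_self_eq_norm_sq, real_inner_comm b a, real_inner_comm b c]
  ring

lemma sq_inner_le_norm_sq_mul_norm_sq (a b : E) : ⟪a, b⟫ ^ 2 ≤ ‖a‖ ^ 2 * ‖b‖ ^ 2 := by
  simpa only [sq, real_inner_self_eq_norm_sq] using real_inner_mul_inner_self_le a b

lemma sq_inner_cross_le (a b c : E) :
    (⟪a, b⟫ * ⟪c, b⟫ - ‖b‖ ^ 2 * ⟪a, c⟫) ^ 2 ≤
      (‖a‖ ^ 2 * ‖b‖ ^ 2 - ⟪a, b⟫ ^ 2) * (‖b‖ ^ 2 * ‖c‖ ^ 2 - ⟪b, c⟫ ^ 2) := by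
  rcases eq_or_ne b 0 with rfl | hb
  · simp
  have ht : 0 < (‖b‖ ^ 2) ^ 2 := by positivity
  have hcs := real_inner_mul_inner_self_le (‖b‖ ^ 2 • a - ⟪a, b⟫ • b) (‖b‖ ^ 2 • c - ⟪c, b⟫ • b)
  simp only [inner_sq_norm_smul_sub_inner_smul] at hcs
  simp only [real_inner_self_eq_norm_sq, real_inner_comm b c] at hcs ⊢
  refine le_of_mul_le_mul_left ?_ ht
  linear_combination hcs

end

lemma abs_div_mul_le_div {x p q t : ℝ} (hx : |x| ≤ p * q) (hp : 0 ≤ p) (hq : 0 ≤ q) (ht : 0 ≤ t) :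
    |x / (p * t)| ≤ q / t := by
  rw [abs_div, abs_of_nonneg (mul_nonneg hp ht)]
  rcases hp.eq_or_lt with rfl | hp
  · simpa using div_nonneg hq ht
  calc |x| / (p * t) ≤ p * q / (p * t) := by gcongr
    _ = q / t := mul_div_mul_left q t hp.ne'

theorem geodesic_curvature_bound_general (d : ℕ) (fr ft ftt : EuclideanSpace ℝ (Fin d)) :
    |(⟪fr, ft⟫ * ⟪ftt, ft⟫ - ⟪ft, ft⟫ * ⟪fr, ftt⟫) /
        (Real.sqrt (‖fr‖ ^ 2 * ‖ft‖ ^ 2 - ⟪fr, ft⟫ ^ 2) * ⟪ft, ft⟫)| ≤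
      Real.sqrt (‖ft‖ ^ 2 * ‖ftt‖ ^ 2 - ⟪ft, ftt⟫ ^ 2) / ‖ft‖ ^ 2 := by
  rw [real_inner_self_eq_norm_sq]
  refine abs_div_mul_le_div ?_ (Real.sqrt_nonneg _) (Real.sqrt_nonneg _) (by positivity)
  rw [← Real.sqrt_mul (sub_nonneg.mpr (sq_inner_le_norm_sq_mul_norm_sq fr ft))]
  exact Real.abs_le_sqrt (sq_inner_cross_le fr ft ftt)

theorem geodesic_curvature_bound (d : ℕ) (fr ft ftt : EuclideanSpace ℝ (Fin d))
    (hli : LinearIndependent ℝ ![fr, ft]) :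
    |(⟪fr, ft⟫ * ⟪ftt, ft⟫ - ⟪ft, ft⟫ * ⟪fr, ftt⟫) /
        (Real.sqrt (‖fr‖ ^ 2 * ‖ft‖ ^ 2 - ⟪fr, ft⟫ ^ 2) * ⟪ft, ft⟫)| ≤
      Real.sqrt (‖ft‖ ^ 2 * ‖ftt‖ ^ 2 - ⟪ft, ftt⟫ ^ 2) / ‖ft‖ ^ 2 :=
  geodesic_curvature_bound_general d fr ft ftt
end

section
/- Let α be a holomorphic 1-form on a neighborhood of 0 in ℂ with a zero of order n ≥ 0 at 0, i.e. α = h(z) dz with h holomorphic, h(z) = z^n g(z), g(0) ≠ 0. Then there exists a holomorphic function φ defined near 0 with φ(0) = 0, φ'(0) ≠ 0, such that h(z) = φ(z)^n · φ'(z) for all z near 0 (i.e. α = φ*(z^n dz)). -/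
/-!
Let `F` be the primitive of `(n + 1) z ^ n g(z)` vanishing at `0`. Its derivative has a zero of
order `n`, so `F` has a zero of order `n + 1`: `F = z ^ (n + 1) G` with `G 0 ≠ 0`. With `u` an
analytic `(n + 1)`-st root of `G`, the local coordinate `φ = z u` satisfies `φ ^ (n + 1) = F`, and
differentiating gives `(n + 1) φ ^ n φ' = (n + 1) z ^ n g`.
-/

open Filter Topology

theorem AnalyticAt.exists_eventually_hasDerivAt {f : ℂ → ℂ} {x : ℂ} (hf : AnalyticAt ℂ f x) :
    ∃ F : ℂ → ℂ, F x = 0 ∧ ∀ᶠ z in 𝓝 x, HasDerivAt F (f z) z := by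
  obtain ⟨r, hr, hfr⟩ := hf.exists_ball_analyticOnNhd
  obtain ⟨F, hF0, hF⟩ := hfr.differentiableOn.isExactOn_ball.with_val_at x 0
  exact ⟨F, hF0, eventually_of_mem (Metric.ball_mem_nhds x hr) hF⟩

theorem analyticOrderAt_eq_succ_of_hasDerivAt {F g : ℂ → ℂ} {x : ℂ} {n : ℕ}
    (hg : AnalyticAt ℂ g x) (hg0 : g x ≠ 0) (hF0 : F x = 0)
    (hF : ∀ᶠ z in 𝓝 x, HasDerivAt F ((z - x) ^ n * g z) z) :
    analyticOrderAt F x = n + 1 := by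
  have hFa : AnalyticAt ℂ F x :=
    Complex.analyticAt_iff_eventually_differentiableAt.mpr (hF.mono fun _ hz => hz.differentiableAt)
  have hF' : analyticOrderAt (deriv F) x = n := by
    rw [analyticOrderAt_congr (hF.mono fun _ hz => hz.deriv),
      (by fun_prop : AnalyticAt ℂ (fun z => (z - x) ^ n * g z) x).analyticOrderAt_eq_natCast]
    exact ⟨g, hg, hg0, .of_forall fun _ => rfl⟩
  simpa [hF0, hF'] using hFa.analyticOrderAt_deriv_add_one.symm

theorem AnalyticAt.exists_pow_eq {f : ℂ → ℂ} {x : ℂ} {m : ℕ} (hf : AnalyticAt ℂ f x)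
    (hfx : f x ≠ 0) (hm : m ≠ 0) :
    ∃ u : ℂ → ℂ, AnalyticAt ℂ u x ∧ u x ≠ 0 ∧ ∀ z, u z ^ m = f z := by
  -- dividing by `f x` keeps the base near `1`, inside the slit plane where `cpow` is analytic
  refine ⟨fun z => f x ^ (m⁻¹ : ℂ) * (f z / f x) ^ (m⁻¹ : ℂ), ?_, ?_, fun z => ?_⟩
  · refine analyticAt_const.mul ((hf.div analyticAt_const hfx).cpow analyticAt_const ?_)
    simp [hfx]
  · simp [hfx]
  · rw [mul_pow, Complex.cpow_nat_inv_pow _ hm, Complex.cpow_nat_inv_pow _ hm,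
      mul_div_cancel₀ _ hfx]

theorem AnalyticAt.exists_eventuallyEq_pow_of_analyticOrderAt_eq {f : ℂ → ℂ} {x : ℂ} {m : ℕ}
    (hf : AnalyticAt ℂ f x) (hm : m ≠ 0) (hord : analyticOrderAt f x = m) :
    ∃ ψ : ℂ → ℂ, AnalyticAt ℂ ψ x ∧ ψ x = 0 ∧ deriv ψ x ≠ 0 ∧
      f =ᶠ[𝓝 x] fun z => ψ z ^ m := by
  obtain ⟨G, hGa, hG0, hfG⟩ := hf.analyticOrderAt_eq_natCast.mp hord
  obtain ⟨u, hua, hu0, hum⟩ := hGa.exists_pow_eq hG0 hm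
  have hψ : HasDerivAt (fun z => (z - x) * u z) (u x) x := by
    simpa using ((hasDerivAt_id' x).sub_const x).fun_mul hua.differentiableAt.hasDerivAt
  refine ⟨fun z => (z - x) * u z, by fun_prop, by simp, hψ.deriv ▸ hu0, ?_⟩
  filter_upwards [hfG] with z hz
  rw [hz, mul_pow, hum, smul_eq_mul]

theorem normalize_holomorphic_form (n : ℕ) (h g : ℂ → ℂ)
    (hg : AnalyticAt ℂ g 0) (hg0 : g 0 ≠ 0)
    (hhg : ∀ᶠ z in nhds 0, h z = z ^ n * g z) :
    ∃ φ : ℂ → ℂ, AnalyticAt ℂ φ 0 ∧ φ 0 = 0 ∧ deriv φ 0 ≠ 0 ∧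
      ∀ᶠ z in nhds 0, h z = φ z ^ n * deriv φ z := by
  have hn : (n + 1 : ℂ) ≠ 0 := Nat.cast_add_one_ne_zero n
  obtain ⟨F, hF0, hF⟩ := (by fun_prop : AnalyticAt ℂ (fun z => z ^ n * ((n + 1) * g z)) 0)
    |>.exists_eventually_hasDerivAt
  have hFa : AnalyticAt ℂ F 0 :=
    Complex.analyticAt_iff_eventually_differentiableAt.mpr (hF.mono fun _ hz => hz.differentiableAt)
  have hord : analyticOrderAt F 0 = (n + 1 : ℕ) :=
    analyticOrderAt_eq_succ_of_hasDerivAt (g := fun z => (n + 1) * g z)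
      (analyticAt_const.mul hg) (mul_ne_zero hn hg0) hF0 (by simpa using hF)
  obtain ⟨φ, hφa, hφ0, hφ', hFφ⟩ :=
    hFa.exists_eventuallyEq_pow_of_analyticOrderAt_eq n.succ_ne_zero hord
  refine ⟨φ, hφa, hφ0, hφ', ?_⟩
  filter_upwards [hFφ.deriv, hF, hφa.eventually_analyticAt, hhg] with z hFz hFz' hφz hhz
  have hpow := hφz.differentiableAt.hasDerivAt.fun_pow (n + 1)
  rw [hFz'.deriv, hpow.deriv, Nat.add_sub_cancel, Nat.cast_add_one] at hFz
  apply mul_left_cancel₀ hn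
  rw [hhz]
  linear_combination hFz
end

section
/- Let g₀ be the Riemannian metric on the punctured disc D* = {z ∈ ℂ : 0 < |z| < 1} given in polar coordinates (r,t) by the matrix [[1 + r²cos²t + r^{-2}sin²t, -(r³ + r^{-1})cos t sin t], [-(r³+r^{-1}) cos t sin t, r² sin²t + r^{-2}cos²t]]. Then for every r ∈ (0,1), the g₀-length of the circle t ↦ re^{it}, t ∈ [0,2π], is at least 4; in particular g₀(∂/∂t, ∂/∂t) = cos²t + r⁴sin²t ≥ cos²t. -/
/-! The integrand dominates `|cos t|`, whose integral over `[0, 2π]` is `4`: `|cos|` is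
`π`-periodic, and over the period `[-π/2, π/2]` it equals `cos`, with integral `2`. -/

open Real intervalIntegral

theorem Real.abs_cos_periodic : Function.Periodic (fun t => |cos t|) π := fun t => by
  simp only [cos_add_pi, abs_neg]

theorem integral_abs_cos_zero_pi : ∫ t in (0 : ℝ)..π, |cos t| = 2 := by
  have hshift := abs_cos_periodic.intervalIntegral_add_eq 0 (-(π / 2))
  rw [zero_add, show -(π / 2) + π = π / 2 by ring] at hshift
  rw [hshift, integral_congr fun t ht => abs_of_nonneg (cos_nonneg_of_mem_Icc ?_), integral_cos]
  · simp only [sin_neg, sin_pi_div_two]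
    norm_num
  · rwa [Set.uIcc_of_le (by linarith [pi_pos])] at ht

theorem integral_abs_cos_zero_two_pi : ∫ t in (0 : ℝ)..(2 * π), |cos t| = 4 := by
  have hint : ∀ a b : ℝ, IntervalIntegrable (fun t => |cos t|) MeasureTheory.volume a b :=
    fun a b => continuous_cos.abs.intervalIntegrable a b
  rw [two_mul, abs_cos_periodic.intervalIntegral_add_eq_add 0 π hint, zero_add,
    integral_abs_cos_zero_pi]
  norm_num

theorem circle_length_lower_bound_general (r : ℝ) :
    (∀ t : ℝ, cos t ^ 2 ≤ cos t ^ 2 + r ^ 4 * sin t ^ 2) ∧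
      4 ≤ ∫ t in (0 : ℝ)..(2 * π), Real.sqrt (cos t ^ 2 + r ^ 4 * sin t ^ 2) := by
  have hcos_sq : ∀ t : ℝ, cos t ^ 2 ≤ cos t ^ 2 + r ^ 4 * sin t ^ 2 := fun t =>
    le_add_of_nonneg_right (by positivity)
  have hcont : Continuous fun t => √(cos t ^ 2 + r ^ 4 * sin t ^ 2) := by fun_prop
  refine ⟨hcos_sq, ?_⟩
  calc (4 : ℝ) = ∫ t in (0 : ℝ)..(2 * π), |cos t| := integral_abs_cos_zero_two_pi.symm
    _ ≤ ∫ t in (0 : ℝ)..(2 * π), √(cos t ^ 2 + r ^ 4 * sin t ^ 2) :=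
      integral_mono_on two_pi_pos.le (continuous_cos.abs.intervalIntegrable _ _)
        (hcont.intervalIntegrable _ _) fun t _ => abs_le_sqrt (hcos_sq t)

theorem circle_length_lower_bound (r : ℝ) (hr0 : 0 < r) (hr1 : r < 1) :
    (∀ t : ℝ, cos t ^ 2 ≤ cos t ^ 2 + r ^ 4 * sin t ^ 2) ∧
      4 ≤ ∫ t in (0 : ℝ)..(2 * π), Real.sqrt (cos t ^ 2 + r ^ 4 * sin t ^ 2) :=
  circle_length_lower_bound_general r
end
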